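/- Validity criterion via injectivity (Parry). In the piecewise monotone setting, the φ-expansion is valid if and only if the coding map i is injective on [0,1]∖S. -/

import Mathlib

open Set Filter Topology

/-- A piecewise monotone dynamical system on `[0,1]`: partition points
`0 = a 0 < a 1 < ⋯ < a k = 1` (`k ≥ 2`), branch intervals `I j = (a j, a (j+1))`,
on each of which `f j` is a continuous strictly monotone map into `[0,1]` with
inverse `g j`; `inc j` records whether `f j` is increasing; the covering condition
`(⋃ᵢ Jᵢ) ∩ I j = I j` (i.e. `I j ⊆ ⋃ᵢ Jᵢ`) holds, where `J i = f i '' I i`. -/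
structure PMS where
  k : ℕ
  a : ℕ → ℝ
  f : ℕ → ℝ → ℝ
  g : ℕ → ℝ → ℝ
  inc : ℕ → Bool
  two_le_k : 2 ≤ k
  a_zero : a 0 = 0
  a_last : a k = 1
  a_mono : ∀ i j, i < j → j ≤ k → a i < a j
  f_cont : ∀ j, j < k → ContinuousOn (f j) (Icc (a j) (a (j + 1)))
  f_mono : ∀ j, j < k → inc j = true → StrictMonoOn (f j) (Icc (a j) (a (j + 1)))
  f_anti : ∀ j, j < k → inc j = false → StrictAntiOn (f j) (Icc (a j) (a (j + 1)))
  f_range : ∀ j, j < k → MapsTo (f j) (Icc (a j) (a (j + 1))) (Icc (0 : ℝ) 1)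
  g_inv : ∀ j, j < k → ∀ t ∈ Icc (a j) (a (j + 1)), g j (f j t) = t
  cover : ∀ j, j < k →
    Ioo (a j) (a (j + 1)) ⊆ ⋃ i ∈ Finset.range k, f i '' Ioo (a i) (a (i + 1))

namespace PMS

/-- The open branch interval `I j = (a j, a (j+1))`. -/
def I (P : PMS) (j : ℕ) : Set ℝ := Ioo (P.a j) (P.a (j + 1))

open Classical in
/-- The index of the branch interval containing `x` (junk value `0` if there is none). -/
noncomputable def idx (P : PMS) (x : ℝ) : ℕ :=
  if h : ∃ j, j < P.k ∧ x ∈ P.I j then h.choose else 0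

open Classical in
/-- The dynamics: `T x = f j x` for `x ∈ I j` (junk value `0` on `S₀`, where `T` is
left undefined in the paper). -/
noncomputable def T (P : PMS) (x : ℝ) : ℝ :=
  if ∃ j, j < P.k ∧ x ∈ P.I j then P.f (P.idx x) x else 0

/-- `S₀ = [0,1] ∖ ⋃ⱼ I j`. -/
def S0 (P : PMS) : Set ℝ := Icc 0 1 \ ⋃ j ∈ Finset.range P.k, P.I j

/-- The singular set `S`: points whose orbit hits `S₀`. -/
def S (P : PMS) : Set ℝ :=
  {x ∈ Icc (0 : ℝ) 1 | ∃ m, P.T^[m] x ∈ P.S0 ∧ ∀ i, i < m → P.T^[i] x ∉ P.S0}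

/-- The coding map (itinerary): `(code x) n = j` iff `Tⁿ x ∈ I j` (for `x ∈ [0,1] ∖ S`). -/
noncomputable def code (P : PMS) (x : ℝ) : ℕ → ℕ := fun n => P.idx (P.T^[n] x)

/-- The map `φ̄` on `[0,k]` as a function of `j ∈ A` and `t ∈ [0,1]`, a point of
`[j, j+1]` being written `j + t`. -/
noncomputable def phibarJ (P : PMS) (j : ℕ) (t : ℝ) : ℝ :=
  if P.inc j then
    if t ≤ P.f j (P.a j) then P.a j
    else if P.f j (P.a (j + 1)) ≤ t then P.a (j + 1)
    else P.g j t
  else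
    if t ≤ P.f j (P.a (j + 1)) then P.a (j + 1)
    else if P.f j (P.a j) ≤ t then P.a j
    else P.g j t

/-- `φ̄ₙ(x) = φ̄(x₀ + φ̄(x₁ + ⋯ + φ̄(x_{n-1})⋯))`. -/
noncomputable def phibarN (P : PMS) : ℕ → (ℕ → ℕ) → ℝ
  | 0, _ => 0
  | n + 1, x => P.phibarJ (x 0) (P.phibarN n fun i => x (i + 1))

/-- `φ̄_∞(x) = limₙ φ̄ₙ(x)` (a junk value where the limit does not exist). -/
noncomputable def phibarInf (P : PMS) (x : ℕ → ℕ) : ℝ :=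
  limUnder atTop fun n => P.phibarN n x

/-- The φ-expansion is well-defined: `limₙ φ̄ₙ(x)` exists for every string `x ∈ A^ℕ`. -/
def WellDefined (P : PMS) : Prop :=
  ∀ x : ℕ → ℕ, (∀ n, x n < P.k) →
    ∃ L : ℝ, Tendsto (fun n => P.phibarN n x) atTop (𝓝 L)

/-- The φ-expansion is valid: for every `x ∈ [0,1] ∖ S`, `limₙ φ̄ₙ(i(x)) = x`. -/
def Valid (P : PMS) : Prop :=
  ∀ x ∈ Icc (0 : ℝ) 1 \ P.S,
    Tendsto (fun n => P.phibarN n (P.code x)) atTop (𝓝 x)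

end PMS

/-!
Valid ⇒ injective is uniqueness of limits. Conversely, let `x` be nonsingular with
itinerary `e`. The compositions `Φₙ = φ̄_{e 0} ∘ ⋯ ∘ φ̄_{e (n-1)}` are monotone or antitone
and satisfy `Φₙ (Tⁿ x) = x`, so both `x` and `φ̄ₙ(e) = Φₙ 0` lie in the nested intervals
`[[Φₙ 0, Φₙ 1]]`.
Since `f j ∘ φ̄_j` is the clamp onto the closure of `J j`, a point strictly inside all these
intervals has its `m`-th iterate in `I (e m)` for every `m`, i.e. it is nonsingular with
itinerary `e`. Injectivity leaves at most one such point, so the intervals shrink to `x`.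
-/

lemma tendsto_of_mem_nested_uIcc {α : Type*} [ConditionallyCompleteLinearOrder α]
    [TopologicalSpace α] [OrderTopology α] [DenselyOrdered α] {a b s : ℕ → α} {x : α}
    (hnest : ∀ n, uIcc (a (n + 1)) (b (n + 1)) ⊆ uIcc (a n) (b n))
    (hx : ∀ n, x ∈ uIcc (a n) (b n)) (hsub : (⋂ n, uIoo (a n) (b n)).Subsingleton)
    (hs : ∀ n, s n ∈ uIcc (a n) (b n)) : Tendsto s atTop (𝓝 x) := by
  set l := fun n => min (a n) (b n)
  set u := fun n => max (a n) (b n)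
  have hl : Monotone l :=
    monotone_nat_of_le_succ fun n => (uIcc_subset_uIcc_iff_le'.1 (hnest n)).1
  have hu : Antitone u :=
    antitone_nat_of_succ_le fun n => (uIcc_subset_uIcc_iff_le'.1 (hnest n)).2
  have hbdd_l : BddAbove (range l) := ⟨x, forall_mem_range.2 fun n => (hx n).1⟩
  have hbdd_u : BddBelow (range u) := ⟨x, forall_mem_range.2 fun n => (hx n).2⟩
  have hLx : ⨆ n, l n ≤ x := ciSup_le fun n => (hx n).1
  have hxU : x ≤ ⨅ n, u n := le_ciInf fun n => (hx n).2
  have hUL : ⨅ n, u n ≤ ⨆ n, l n := by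
    by_contra! h
    refine Ioo_infinite h (hsub.anti fun y hy => mem_iInter.2 fun n => ?_).finite
    exact ⟨(le_ciSup hbdd_l n).trans_lt hy.1, hy.2.trans_le (ciInf_le hbdd_u n)⟩
  refine tendsto_of_tendsto_of_tendsto_of_le_of_le (g := l) (h := u) ?_ ?_
    (fun n => (hs n).1) (fun n => (hs n).2)
  · simpa [le_antisymm hLx (hxU.trans hUL)] using tendsto_atTop_ciSup hl hbdd_l
  · simpa [le_antisymm (hUL.trans hLx) hxU] using tendsto_atTop_ciInf hu hbdd_u

lemma Monotone.mem_uIoo_of_map_mem_uIoo {α β : Type*} [LinearOrder α] [LinearOrder β]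
    {c : α → β} (hc : Monotone c) {p q y : α} (hy : c y ∈ uIoo (c p) (c q)) :
    y ∈ uIoo p q := by
  rw [uIoo_eq_union] at hy ⊢
  exact hy.imp (fun h => ⟨hc.reflect_lt h.1, hc.reflect_lt h.2⟩)
    (fun h => ⟨hc.reflect_lt h.1, hc.reflect_lt h.2⟩)

lemma StrictMonoOn.map_mem_uIoo {α β : Type*} [LinearOrder α] [LinearOrder β]
    {f : α → β} {s : Set α} (hf : StrictMonoOn f s) {p q y : α} (hp : p ∈ s) (hq : q ∈ s)
    (hy : y ∈ s) (hpq : y ∈ uIoo p q) : f y ∈ uIoo (f p) (f q) := by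
  rw [uIoo_eq_union] at hpq ⊢
  exact hpq.imp (fun h => ⟨hf hp hy h.1, hf hy hq h.2⟩)
    (fun h => ⟨hf hq hy h.1, hf hy hp h.2⟩)

lemma StrictAntiOn.map_mem_uIoo {α β : Type*} [LinearOrder α] [LinearOrder β]
    {f : α → β} {s : Set α} (hf : StrictAntiOn f s) {p q y : α} (hp : p ∈ s) (hq : q ∈ s)
    (hy : y ∈ s) (hpq : y ∈ uIoo p q) : f y ∈ uIoo (f p) (f q) := by
  rw [uIoo_eq_union] at hpq ⊢
  exact hpq.symm.imp (fun h => ⟨hf hy hp h.2, hf hq hy h.1⟩)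
    (fun h => ⟨hf hy hq h.2, hf hp hy h.1⟩)

namespace PMS

variable (P : PMS)

lemma a_lt {j : ℕ} (hj : j < P.k) : P.a j < P.a (j + 1) :=
  P.a_mono j (j + 1) j.lt_succ_self hj

lemma a_le {i j : ℕ} (hij : i ≤ j) (hj : j ≤ P.k) : P.a i ≤ P.a j :=
  hij.eq_or_lt.elim (fun h => h ▸ le_rfl) fun h => (P.a_mono i j h hj).le

lemma Icc_subset_unit {j : ℕ} (hj : j < P.k) : Icc (P.a j) (P.a (j + 1)) ⊆ Icc 0 1 := by
  rw [← P.a_zero, ← P.a_last]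
  exact Icc_subset_Icc (P.a_le j.zero_le hj.le) (P.a_le hj le_rfl)

lemma I_subset_unit {j : ℕ} (hj : j < P.k) : P.I j ⊆ Icc 0 1 :=
  Ioo_subset_Icc_self.trans (P.Icc_subset_unit hj)

lemma f_strictMonoOn_or_strictAntiOn {j : ℕ} (hj : j < P.k) :
    StrictMonoOn (P.f j) (Icc (P.a j) (P.a (j + 1))) ∨
      StrictAntiOn (P.f j) (Icc (P.a j) (P.a (j + 1))) := by
  cases h : P.inc j
  exacts [Or.inr (P.f_anti j hj h), Or.inl (P.f_mono j hj h)]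

lemma f_mem_uIcc {j : ℕ} (hj : j < P.k) {s : ℝ} (hs : s ∈ Icc (P.a j) (P.a (j + 1))) :
    P.f j s ∈ uIcc (P.f j (P.a j)) (P.f j (P.a (j + 1))) := by
  rw [← uIcc_of_le (P.a_lt hj).le] at hs
  rcases P.f_strictMonoOn_or_strictAntiOn hj with h | h
  · exact (uIcc_of_le (P.a_lt hj).le ▸ h.monotoneOn).mapsTo_uIcc hs
  · exact (uIcc_of_le (P.a_lt hj).le ▸ h.antitoneOn).mapsTo_uIcc hs

/-- Projection onto the closure of `J j`. -/
noncomputable def clampJ (j : ℕ) (t : ℝ) : ℝ :=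
  max (min (P.f j (P.a j)) (P.f j (P.a (j + 1))))
    (min t (max (P.f j (P.a j)) (P.f j (P.a (j + 1)))))

lemma monotone_clampJ (j : ℕ) : Monotone (P.clampJ j) :=
  monotone_const.max (monotone_id.min monotone_const)

lemma clampJ_of_mem_uIcc {j : ℕ} {t : ℝ}
    (ht : t ∈ uIcc (P.f j (P.a j)) (P.f j (P.a (j + 1)))) : P.clampJ j t = t := by
  rw [clampJ, min_eq_left ht.2, max_eq_right ht.1]

lemma phibarJ_spec {j : ℕ} (hj : j < P.k) (t : ℝ) :
    P.phibarJ j t ∈ Icc (P.a j) (P.a (j + 1)) ∧ P.f j (P.phibarJ j t) = P.clampJ j t := by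
  have hcd := (P.a_lt hj).le
  have hinner : ∀ t ∈ uIcc (P.f j (P.a j)) (P.f j (P.a (j + 1))),
      P.g j t ∈ Icc (P.a j) (P.a (j + 1)) ∧ P.f j (P.g j t) = P.clampJ j t := by
    intro t ht
    obtain ⟨s, hs, rfl⟩ := intermediate_value_uIcc (uIcc_of_le hcd ▸ P.f_cont j hj) ht
    rw [uIcc_of_le hcd] at hs
    rw [P.g_inv j hj s hs, P.clampJ_of_mem_uIcc ht]
    exact ⟨hs, rfl⟩
  have hc : P.a j ∈ Icc (P.a j) (P.a (j + 1)) := left_mem_Icc.2 hcd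
  have hd : P.a (j + 1) ∈ Icc (P.a j) (P.a (j + 1)) := right_mem_Icc.2 hcd
  cases hinc : P.inc j
  · have hlt := P.f_anti j hj hinc hc hd (P.a_lt hj)
    simp only [phibarJ, hinc, Bool.false_eq_true, if_false]
    split_ifs with h₁ h₂
    · exact ⟨hd, by grind [clampJ]⟩
    · exact ⟨hc, by grind [clampJ]⟩
    · exact hinner t (by rw [uIcc_of_ge hlt.le]; constructor <;> linarith)
  · have hlt := P.f_mono j hj hinc hc hd (P.a_lt hj)
    simp only [phibarJ, hinc, if_true]
    split_ifs with h₁ h₂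
    · exact ⟨hc, by grind [clampJ]⟩
    · exact ⟨hd, by grind [clampJ]⟩
    · exact hinner t (by rw [uIcc_of_le hlt.le]; constructor <;> linarith)

lemma phibarJ_mem {j : ℕ} (hj : j < P.k) (t : ℝ) :
    P.phibarJ j t ∈ Icc (P.a j) (P.a (j + 1)) :=
  (P.phibarJ_spec hj t).1

lemma f_phibarJ {j : ℕ} (hj : j < P.k) (t : ℝ) : P.f j (P.phibarJ j t) = P.clampJ j t :=
  (P.phibarJ_spec hj t).2

lemma phibarJ_mem_unit {j : ℕ} (hj : j < P.k) (t : ℝ) : P.phibarJ j t ∈ Icc 0 1 :=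
  P.Icc_subset_unit hj (P.phibarJ_mem hj t)

lemma phibarJ_f {j : ℕ} (hj : j < P.k) {s : ℝ} (hs : s ∈ Icc (P.a j) (P.a (j + 1))) :
    P.phibarJ j (P.f j s) = s := by
  have h := P.f_phibarJ hj (P.f j s)
  rw [P.clampJ_of_mem_uIcc (P.f_mem_uIcc hj hs)] at h
  rcases P.f_strictMonoOn_or_strictAntiOn hj with hf | hf
  exacts [hf.injOn (P.phibarJ_mem hj _) hs h, hf.injOn (P.phibarJ_mem hj _) hs h]

lemma phibarJ_monotone_or_antitone {j : ℕ} (hj : j < P.k) :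
    Monotone (P.phibarJ j) ∨ Antitone (P.phibarJ j) := by
  have hclamp : ∀ s t, s ≤ t → P.f j (P.phibarJ j s) ≤ P.f j (P.phibarJ j t) :=
    fun s t hst => by simpa only [P.f_phibarJ hj] using P.monotone_clampJ j hst
  rcases P.f_strictMonoOn_or_strictAntiOn hj with hf | hf
  · exact Or.inl fun s t hst =>
      (hf.le_iff_le (P.phibarJ_mem hj s) (P.phibarJ_mem hj t)).1 (hclamp s t hst)
  · exact Or.inr fun s t hst =>
      (hf.le_iff_ge (P.phibarJ_mem hj s) (P.phibarJ_mem hj t)).1 (hclamp s t hst)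

lemma mem_I_and_f_mem_uIoo {j : ℕ} (hj : j < P.k) {p q w : ℝ}
    (hw : w ∈ uIoo (P.phibarJ j p) (P.phibarJ j q)) : w ∈ P.I j ∧ P.f j w ∈ uIoo p q := by
  have hwI : w ∈ P.I j := uIoo_subset_Ioo (P.phibarJ_mem hj p) (P.phibarJ_mem hj q) hw
  have hwIcc := Ioo_subset_Icc_self hwI
  have hfw : P.f j w ∈ uIoo (P.clampJ j p) (P.clampJ j q) := by
    rw [← P.f_phibarJ hj, ← P.f_phibarJ hj]
    rcases P.f_strictMonoOn_or_strictAntiOn hj with hf | hf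
    exacts [hf.map_mem_uIoo (P.phibarJ_mem hj p) (P.phibarJ_mem hj q) hwIcc hw,
      hf.map_mem_uIoo (P.phibarJ_mem hj p) (P.phibarJ_mem hj q) hwIcc hw]
  rw [← P.clampJ_of_mem_uIcc (P.f_mem_uIcc hj hwIcc)] at hfw
  exact ⟨hwI, (P.monotone_clampJ j).mem_uIoo_of_map_mem_uIoo hfw⟩

lemma mem_I_unique {i j : ℕ} (hi : i < P.k) (hj : j < P.k) {w : ℝ}
    (hwi : w ∈ P.I i) (hwj : w ∈ P.I j) : i = j := by
  by_contra hne
  rcases Nat.lt_or_gt_of_ne hne with h | h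
  · exact (hwi.2.trans_le (P.a_le h hj.le)).not_gt hwj.1
  · exact (hwj.2.trans_le (P.a_le h hi.le)).not_gt hwi.1

lemma idx_eq {j : ℕ} (hj : j < P.k) {w : ℝ} (hw : w ∈ P.I j) : P.idx w = j := by
  have hex : ∃ i, i < P.k ∧ w ∈ P.I i := ⟨j, hj, hw⟩
  rw [idx, dif_pos hex]
  exact P.mem_I_unique hex.choose_spec.1 hj hex.choose_spec.2 hw

lemma T_eq {j : ℕ} (hj : j < P.k) {w : ℝ} (hw : w ∈ P.I j) : P.T w = P.f j w := by
  rw [T, if_pos ⟨j, hj, hw⟩, P.idx_eq hj hw]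

lemma idx_lt_and_mem_I {y : ℝ} (hy : y ∈ Icc 0 1 \ P.S0) :
    P.idx y < P.k ∧ y ∈ P.I (P.idx y) := by
  obtain ⟨j, hj, hyj⟩ : ∃ j, j < P.k ∧ y ∈ P.I j := by
    simpa [S0, hy.1] using hy.2
  rw [P.idx_eq hj hyj]
  exact ⟨hj, hyj⟩

lemma iterate_notMem_S0 {x : ℝ} (hx : x ∈ Icc 0 1 \ P.S) (n : ℕ) : P.T^[n] x ∉ P.S0 := by
  classical
  intro hn
  have hex : ∃ n, P.T^[n] x ∈ P.S0 := ⟨n, hn⟩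
  exact hx.2 ⟨hx.1, Nat.find hex, Nat.find_spec hex, fun i hi => Nat.find_min hex hi⟩

lemma iterate_mem_unit {x : ℝ} (hx : x ∈ Icc 0 1 \ P.S) (n : ℕ) : P.T^[n] x ∈ Icc 0 1 := by
  induction n with
  | zero => exact hx.1
  | succ n ih =>
    obtain ⟨hj, hmem⟩ := P.idx_lt_and_mem_I ⟨ih, P.iterate_notMem_S0 hx n⟩
    rw [Function.iterate_succ_apply', P.T_eq hj hmem]
    exact P.f_range _ hj (Ioo_subset_Icc_self hmem)

lemma code_lt_and_iterate_mem_I {x : ℝ} (hx : x ∈ Icc 0 1 \ P.S) (n : ℕ) :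
    P.code x n < P.k ∧ P.T^[n] x ∈ P.I (P.code x n) :=
  P.idx_lt_and_mem_I ⟨P.iterate_mem_unit hx n, P.iterate_notMem_S0 hx n⟩

lemma mem_diff_S_and_code_eq {e : ℕ → ℕ} (he : ∀ m, e m < P.k) {w : ℝ}
    (hw : ∀ m, P.T^[m] w ∈ P.I (e m)) : w ∈ Icc 0 1 \ P.S ∧ P.code w = e := by
  refine ⟨⟨P.I_subset_unit (he 0) (hw 0), ?_⟩, funext fun m => P.idx_eq (he m) (hw m)⟩
  rintro ⟨-, m, hm, -⟩
  exact hm.2 (mem_iUnion₂.2 ⟨e m, Finset.mem_range.2 (he m), hw m⟩)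

/-- `phibarComp e n = φ̄_{e 0} ∘ ⋯ ∘ φ̄_{e (n-1)}`. -/
noncomputable def phibarComp (P : PMS) : (ℕ → ℕ) → ℕ → ℝ → ℝ
  | _, 0, t => t
  | e, n + 1, t => P.phibarJ (e 0) (P.phibarComp (fun i => e (i + 1)) n t)

lemma phibarN_eq_phibarComp (n : ℕ) (e : ℕ → ℕ) : P.phibarN n e = P.phibarComp e n 0 := by
  induction n generalizing e with
  | zero => rfl
  | succ n ih => simp only [phibarN, phibarComp, ih]

lemma phibarComp_succ' (e : ℕ → ℕ) (n : ℕ) (t : ℝ) :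
    P.phibarComp e (n + 1) t = P.phibarComp e n (P.phibarJ (e n) t) := by
  induction n generalizing e with
  | zero => rfl
  | succ n ih => exact congrArg (P.phibarJ (e 0)) (ih fun i => e (i + 1))

lemma phibarComp_monotone_or_antitone {e : ℕ → ℕ} (he : ∀ m, e m < P.k) (n : ℕ) :
    Monotone (P.phibarComp e n) ∨ Antitone (P.phibarComp e n) := by
  induction n generalizing e with
  | zero => exact Or.inl monotone_id
  | succ n ih =>
    rcases P.phibarJ_monotone_or_antitone (he 0) with h₁ | h₁ <;>
      rcases ih fun m => he (m + 1) with h₂ | h₂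
    exacts [Or.inl (h₁.comp h₂), Or.inr (h₁.comp_antitone h₂),
      Or.inr (h₁.comp_monotone h₂), Or.inl (h₁.comp h₂)]

lemma phibarComp_mem_uIcc {e : ℕ → ℕ} (he : ∀ m, e m < P.k) (n : ℕ) {t : ℝ}
    (ht : t ∈ Icc 0 1) :
    P.phibarComp e n t ∈ uIcc (P.phibarComp e n 0) (P.phibarComp e n 1) := by
  rw [← uIcc_of_le zero_le_one] at ht
  rcases P.phibarComp_monotone_or_antitone he n with h | h
  exacts [h.mapsTo_uIcc ht, h.mapsTo_uIcc ht]

lemma phibarComp_uIcc_succ_subset {e : ℕ → ℕ} (he : ∀ m, e m < P.k) (n : ℕ) :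
    uIcc (P.phibarComp e (n + 1) 0) (P.phibarComp e (n + 1) 1) ⊆
      uIcc (P.phibarComp e n 0) (P.phibarComp e n 1) := by
  simp only [phibarComp_succ']
  exact uIcc_subset_uIcc (P.phibarComp_mem_uIcc he n (P.phibarJ_mem_unit (he n) 0))
    (P.phibarComp_mem_uIcc he n (P.phibarJ_mem_unit (he n) 1))

lemma phibarComp_code_iterate {x : ℝ} (hx : x ∈ Icc 0 1 \ P.S) (n : ℕ) :
    P.phibarComp (P.code x) n (P.T^[n] x) = x := by
  induction n with
  | zero => rfl
  | succ n ih =>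
    obtain ⟨hj, hmem⟩ := P.code_lt_and_iterate_mem_I hx n
    rw [phibarComp_succ', Function.iterate_succ_apply', P.T_eq hj hmem,
      P.phibarJ_f hj (Ioo_subset_Icc_self hmem), ih]

lemma iterate_mem_I_of_mem_uIoo {e : ℕ → ℕ} (he : ∀ m, e m < P.k) {n : ℕ} {w : ℝ}
    (hw : w ∈ uIoo (P.phibarComp e n 0) (P.phibarComp e n 1)) {m : ℕ} (hm : m < n) :
    P.T^[m] w ∈ P.I (e m) := by
  induction n generalizing e w m with
  | zero => exact absurd hm m.not_lt_zero
  | succ n ih =>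
    obtain ⟨hwI, hfw⟩ := P.mem_I_and_f_mem_uIoo (he 0) hw
    cases m with
    | zero => exact hwI
    | succ m =>
      rw [Function.iterate_succ_apply, P.T_eq (he 0) hwI]
      exact ih (fun i => he (i + 1)) hfw (Nat.lt_of_succ_lt_succ hm)

lemma mem_diff_S_and_code_eq_of_mem_iInter {e : ℕ → ℕ} (he : ∀ m, e m < P.k) {w : ℝ}
    (hw : w ∈ ⋂ n, uIoo (P.phibarComp e n 0) (P.phibarComp e n 1)) :
    w ∈ Icc 0 1 \ P.S ∧ P.code w = e :=
  P.mem_diff_S_and_code_eq he fun m =>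
    P.iterate_mem_I_of_mem_uIoo he (mem_iInter.1 hw (m + 1)) m.lt_succ_self

end PMS

/-- **Validity criterion via injectivity (Parry).** In the piecewise monotone setting,
the φ-expansion is valid if and only if the coding map `i` is injective on `[0,1] ∖ S`. -/
theorem validity_iff_injective (P : PMS) :
    P.Valid ↔ Set.InjOn P.code (Set.Icc (0 : ℝ) 1 \ P.S) := by
  refine ⟨fun hV x hx y hy hxy => tendsto_nhds_unique (hV x hx) (hxy ▸ hV y hy),
    fun hInj x hx => ?_⟩
  have he : ∀ m, P.code x m < P.k := fun m => (P.code_lt_and_iterate_mem_I hx m).1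
  have hsub :
      (⋂ n, uIoo (P.phibarComp (P.code x) n 0) (P.phibarComp (P.code x) n 1)).Subsingleton :=
    fun y hy z hz => by
      obtain ⟨hyD, hye⟩ := P.mem_diff_S_and_code_eq_of_mem_iInter he hy
      obtain ⟨hzD, hze⟩ := P.mem_diff_S_and_code_eq_of_mem_iInter he hz
      exact hInj hyD hzD (hye.trans hze.symm)
  refine tendsto_of_mem_nested_uIcc (P.phibarComp_uIcc_succ_subset he) (fun n => ?_) hsub
    fun n => ?_
  · simpa only [P.phibarComp_code_iterate hx n] using
      P.phibarComp_mem_uIcc he n (P.iterate_mem_unit hx n)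
  · rw [P.phibarN_eq_phibarComp]
    exact P.phibarComp_mem_uIcc he n ⟨le_rfl, zero_le_one⟩
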